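/- For all r, i, j ∈ {1,…,4}, the torsion d-tensor R_{(r)ij}^{(1)} := δN_{(r)i}^{(1)}/δx^j − δN_{(r)j}^{(1)}/δx^i equals −4 σ_{ij}(x) ( p_i δ_{ir} − p_j δ_{jr} ), where N_{(r)m}^{(1)} := −4 σ_r(x) p_r δ_{rm} and δ/δx^m := ∂/∂x^m + 4σ_m(x) p_m ∂/∂p_m (no summation over m). -/

import Mathlib

/-- Partial derivative of `f : (Fin 4 → ℝ) → ℝ` with respect to the `i`-th coordinate. -/
noncomputable def pd (f : (Fin 4 → ℝ) → ℝ) (i : Fin 4) (v : Fin 4 → ℝ) : ℝ :=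
  deriv (fun s => f (Function.update v i s)) (v i)

/-- Kronecker delta. -/
noncomputable def kron (i j : Fin 4) : ℝ := if i = j then 1 else 0

/-- The spatial nonlinear connection `N_{(r)m}^{(1)} = −4 σ_r(x) p_r δ_{rm}`. -/
noncomputable def Nc (σ : (Fin 4 → ℝ) → ℝ) (x p : Fin 4 → ℝ) (r m : Fin 4) : ℝ :=
  -4 * pd σ r x * p r * kron r m

lemma update_affine (v : Fin 4 → ℝ) (i : Fin 4) (s : ℝ) :
    Function.update v i s = v + (s - v i) • (Pi.single i 1 : Fin 4 → ℝ) := by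
  funext k
  by_cases h : k = i
  · subst h; simp
  · simp [Function.update_of_ne h, Pi.single_apply, h]

lemma pd_eq_fderiv (f : (Fin 4 → ℝ) → ℝ) (i : Fin 4) (v : Fin 4 → ℝ)
    (hf : DifferentiableAt ℝ f v) :
    pd f i v = fderiv ℝ f v (Pi.single i 1 : Fin 4 → ℝ) := by
  have hg : HasDerivAt (fun s : ℝ => v + (s - v i) • (Pi.single i 1 : Fin 4 → ℝ))
      ((Pi.single i 1 : Fin 4 → ℝ)) (v i) := by
    have := (((hasDerivAt_id (v i)).sub_const (v i)).smul_const ((Pi.single i 1 : Fin 4 → ℝ))).const_add v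
    simpa using this
  have hv : v + ((v i : ℝ) - v i) • (Pi.single i 1 : Fin 4 → ℝ) = v := by simp
  have h2 : HasDerivAt (fun s : ℝ => f (v + (s - v i) • (Pi.single i 1 : Fin 4 → ℝ)))
      (fderiv ℝ f v (Pi.single i 1 : Fin 4 → ℝ)) (v i) := by
    have hf' : HasFDerivAt f (fderiv ℝ f v) (v + ((v i : ℝ) - v i) • (Pi.single i 1 : Fin 4 → ℝ)) := by
      rw [hv]; exact hf.hasFDerivAt
    have := hf'.comp_hasDerivAt (v i) hg
    exact this
  have heq : (fun s : ℝ => f (Function.update v i s))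
      = fun s => f (v + (s - v i) • (Pi.single i 1 : Fin 4 → ℝ)) := by
    funext s; rw [update_affine]
  rw [pd, heq, h2.deriv]

lemma pd_const_mul (c : ℝ) (f : (Fin 4 → ℝ) → ℝ) (i : Fin 4) (v : Fin 4 → ℝ) :
    pd (fun w => c * f w) i v = c * pd f i v := by
  unfold pd
  exact deriv_const_mul_field c

lemma pd_coord (r j : Fin 4) (p : Fin 4 → ℝ) :
    pd (fun w => w r) j p = if r = j then 1 else 0 := by
  unfold pd
  by_cases h : r = j
  · subst h; simp
  · simp [Function.update_of_ne h, h]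

lemma pd_sigma_eq (σ : (Fin 4 → ℝ) → ℝ) (hσ : ContDiff ℝ (⊤ : ℕ∞) σ) (a : Fin 4) :
    (fun x' => pd σ a x') = fun x' => fderiv ℝ σ x' (Pi.single a 1) := by
  funext x'
  exact pd_eq_fderiv σ a x' ((hσ.differentiable (by simp)) x')

lemma pd_sigma_contDiff (σ : (Fin 4 → ℝ) → ℝ) (hσ : ContDiff ℝ (⊤ : ℕ∞) σ) (a : Fin 4) :
    ContDiff ℝ (⊤ : ℕ∞) (fun x' => pd σ a x') := by
  rw [pd_sigma_eq σ hσ a]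
  exact (hσ.fderiv_right (by simp)).clm_apply contDiff_const

lemma pd_symm (σ : (Fin 4 → ℝ) → ℝ) (hσ : ContDiff ℝ (⊤ : ℕ∞) σ) (a b : Fin 4) (x : Fin 4 → ℝ) :
    pd (fun x' => pd σ a x') b x = pd (fun x' => pd σ b x') a x := by
  have hσ' : ContDiff ℝ (⊤ : ℕ∞) (fderiv ℝ σ) := hσ.fderiv_right (by simp)
  have key : ∀ a b : Fin 4, pd (fun x' => pd σ a x') b x
      = (fderiv ℝ (fderiv ℝ σ) x (Pi.single b 1)) (Pi.single a 1) := by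
    intro a b
    rw [pd_sigma_eq σ hσ a,
      pd_eq_fderiv _ b x ((hσ'.differentiable (by simp)).clm_apply (differentiable_const _) x)]
    rw [fderiv_clm_apply ((hσ'.differentiable (by simp)) x) (differentiableAt_const _)]
    simp
  rw [key a b, key b a]
  exact second_derivative_symmetric (fun y => ((hσ.differentiable (by simp)) y).hasFDerivAt)
    ((hσ'.differentiable (by simp)) x).hasFDerivAt (Pi.single b 1) (Pi.single a 1)

/-- the torsion d-tensor
`R_{(r)ij}^{(1)} = δN_{(r)i}^{(1)}/δx^j − δN_{(r)j}^{(1)}/δx^i`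
(with `δ/δx^m = ∂/∂x^m + 4σ_m(x) p_m ∂/∂p_m`) equals
`−4 σ_{ij}(x)(p_i δ_{ir} − p_j δ_{jr})`. -/
theorem stmt_8 (σ : (Fin 4 → ℝ) → ℝ) (hσ : ContDiff ℝ (⊤ : ℕ∞) σ)
    (x p : Fin 4 → ℝ) (hp : ∀ i, 0 < p i) (r i j : Fin 4) :
    ((pd (fun x' => Nc σ x' p r i) j x
        + 4 * pd σ j x * p j * pd (fun p' => Nc σ x p' r i) j p)
      - (pd (fun x' => Nc σ x' p r j) i x
        + 4 * pd σ i x * p i * pd (fun p' => Nc σ x p' r j) i p))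
    = -4 * pd (fun x' => pd σ i x') j x * (p i * kron i r - p j * kron j r) := by
  have hx : ∀ a b : Fin 4, pd (fun x' => Nc σ x' p r a) b x
      = (-4 * p r * kron r a) * pd (fun x' => pd σ r x') b x := by
    intro a b
    have : (fun x' => Nc σ x' p r a) = fun x' => (-4 * p r * kron r a) * pd σ r x' := by
      funext x'; simp [Nc]; ring
    rw [this, pd_const_mul]
  have hpder : ∀ a b : Fin 4, pd (fun p' => Nc σ x p' r a) b p
      = (-4 * pd σ r x * kron r a) * (if r = b then 1 else 0) := by
    intro a b
    have : (fun p' => Nc σ x p' r a) = fun p' => (-4 * pd σ r x * kron r a) * p' r := by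
      funext p'; simp [Nc]; ring
    rw [this, pd_const_mul, pd_coord]
  rw [hx i j, hx j i, hpder i j, hpder j i]
  by_cases hri : r = i
  · subst hri
    by_cases hrj : r = j
    · subst hrj; ring
    · simp [kron, hrj, Ne.symm hrj]
      ring
  · by_cases hrj : r = j
    · subst hrj
      rw [pd_symm σ hσ r i x]
      simp [kron, hri, Ne.symm hri]
      ring
    · simp [kron, hri, hrj, Ne.symm hri, Ne.symm hrj]
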